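/- For the saturation function γ(s) = sign(s)·min(|s|, 1), the averaged gain ρ(r) = (1/(2π)) ∫₀^{2π} γ(r sin φ) sin φ dφ is continuous and strictly increasing in r on [0, ∞), with ρ(r) = r/2 for 0 ≤ r ≤ 1 and ρ(r) ≤ 2/π for all r ≥ 0. -/

import Mathlib

open Real

noncomputable def rho (γ : ℝ → ℝ) (r : ℝ) : ℝ :=
  (1 / (2 * π)) * ∫ φ in (0:ℝ)..(2 * π), γ (r * Real.sin φ) * Real.sin φ

/-- The unit saturation function. -/
noncomputable def sat (s : ℝ) : ℝ := Real.sign s * min |s| 1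

lemma sat_eq (s : ℝ) : sat s = max (-1) (min s 1) := by
  unfold sat
  rcases lt_trichotomy s 0 with h | h | h
  · rw [Real.sign_of_neg h, abs_of_neg h, min_eq_left (by linarith : s ≤ 1)]
    rcases le_total (-s) 1 with h1 | h1
    · rw [min_eq_left h1, max_eq_right (by linarith)]; ring
    · rw [min_eq_right h1, max_eq_left (by linarith)]; ring
  · simp [h]
  · rw [Real.sign_of_pos h, abs_of_pos h, one_mul,
      max_eq_right (le_min (by linarith) (by norm_num))]

lemma sat_cont : Continuous sat := by
  have : sat = fun s => max (-1) (min s 1) := funext sat_eq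
  rw [this]
  exact continuous_const.max (continuous_id.min continuous_const)

lemma sat_lip (a b : ℝ) : |sat a - sat b| ≤ |a - b| := by
  rw [sat_eq, sat_eq, max_comm (-1) _, max_comm (-1) _]
  refine le_trans (abs_max_sub_max_le_abs _ _ _) ?_
  refine le_trans (abs_min_sub_min_le_max a 1 b 1) ?_
  simp

lemma sat_of_abs_le {s : ℝ} (h : |s| ≤ 1) : sat s = s := by
  rw [sat_eq, min_eq_left (abs_le.mp h).2, max_eq_right (abs_le.mp h).1]

lemma sat_abs_le (s : ℝ) : |sat s| ≤ 1 := by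
  rw [sat_eq, abs_le]
  constructor
  · exact le_max_left _ _
  · exact max_le (by norm_num) (min_le_right _ _)

lemma sat_mono : Monotone sat := by
  have : sat = fun s => max (-1) (min s 1) := funext sat_eq
  rw [this]
  exact monotone_const.max ((monotone_id.min monotone_const))

lemma sat_sign {s : ℝ} (h : 0 ≤ s) : 0 ≤ sat s := by
  have := sat_mono h
  rwa [sat_of_abs_le (by simp)] at this

/-- the integrand -/
noncomputable def g (r φ : ℝ) : ℝ := sat (r * Real.sin φ) * Real.sin φ

lemma g_cont (r : ℝ) : Continuous (g r) :=
  (sat_cont.comp (continuous_const.mul Real.continuous_sin)).mul Real.continuous_sin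

lemma g_nonneg {r : ℝ} (hr : 0 ≤ r) (φ : ℝ) : 0 ≤ g r φ := by
  unfold g
  rcases le_total 0 (Real.sin φ) with h | h
  · exact mul_nonneg (sat_sign (mul_nonneg hr h)) h
  · have hs : sat (r * Real.sin φ) ≤ 0 := by
      have : sat (r * Real.sin φ) ≤ sat 0 := sat_mono (mul_nonpos_of_nonneg_of_nonpos hr h)
      simpa [sat] using this
    nlinarith

lemma g_mono {r₁ r₂ : ℝ} (h1 : 0 ≤ r₁) (h12 : r₁ ≤ r₂) (φ : ℝ) : g r₁ φ ≤ g r₂ φ := by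
  unfold g
  rcases le_total 0 (Real.sin φ) with h | h
  · exact mul_le_mul_of_nonneg_right (sat_mono (mul_le_mul_of_nonneg_right h12 h)) h
  · exact mul_le_mul_of_nonpos_right (sat_mono (mul_le_mul_of_nonpos_right h12 h)) h

lemma g_le_abs (r φ : ℝ) : g r φ ≤ |Real.sin φ| := by
  unfold g
  calc sat (r * Real.sin φ) * Real.sin φ ≤ |sat (r * Real.sin φ) * Real.sin φ| := le_abs_self _
    _ = |sat (r * Real.sin φ)| * |Real.sin φ| := abs_mul _ _
    _ ≤ 1 * |Real.sin φ| := mul_le_mul_of_nonneg_right (sat_abs_le _) (abs_nonneg _)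
    _ = |Real.sin φ| := one_mul _

lemma integral_abs_sin : ∫ φ in (0:ℝ)..(2 * π), |Real.sin φ| = 4 := by
  have h1 : ∫ φ in (0:ℝ)..π, |Real.sin φ| = 2 := by
    rw [intervalIntegral.integral_congr (g := Real.sin) ?_]
    · rw [integral_sin]; norm_num
    · intro x hx
      rw [Set.uIcc_of_le Real.pi_nonneg] at hx
      exact abs_of_nonneg (Real.sin_nonneg_of_nonneg_of_le_pi hx.1 hx.2)
  have h2 : ∫ φ in π..(2 * π), |Real.sin φ| = 2 := by
    rw [intervalIntegral.integral_congr (g := fun x => -Real.sin x) ?_]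
    · rw [intervalIntegral.integral_neg, integral_sin]
      norm_num [Real.cos_two_pi]
    · intro x hx
      rw [Set.uIcc_of_le (by linarith [Real.pi_nonneg] : π ≤ 2 * π)] at hx
      have : Real.sin x ≤ 0 := by
        have : Real.sin (x - π) ≥ 0 := Real.sin_nonneg_of_nonneg_of_le_pi (by linarith [hx.1]) (by linarith [hx.2])
        have hs : Real.sin (x - π) = -Real.sin x := by
          rw [Real.sin_sub]; simp
        linarith [hs ▸ this]
      simp [abs_of_nonpos this]
  have := intervalIntegral.integral_add_adjacent_intervals
    (μ := MeasureTheory.volume) (a := (0:ℝ)) (b := π) (c := 2 * π)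
    (f := fun φ => |Real.sin φ|)
    ((continuous_abs.comp Real.continuous_sin).intervalIntegrable _ _)
    ((continuous_abs.comp Real.continuous_sin).intervalIntegrable _ _)
  rw [← this, h1, h2]; norm_num

lemma rho_eq (r : ℝ) : rho sat r = (1 / (2 * π)) * ∫ φ in (0:ℝ)..(2 * π), g r φ := rfl

lemma rho_lip (r₁ r₂ : ℝ) : |rho sat r₁ - rho sat r₂| ≤ (1/2) * |r₁ - r₂| := by
  have hπ : (0:ℝ) < π := Real.pi_pos
  have hint : ∀ r : ℝ, IntervalIntegrable (g r) MeasureTheory.volume 0 (2 * π) :=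
    fun r => (g_cont r).intervalIntegrable _ _
  rw [rho_eq, rho_eq, ← mul_sub,
    ← intervalIntegral.integral_sub (hint r₁) (hint r₂), abs_mul]
  have habs : |(1:ℝ) / (2 * π)| = 1 / (2 * π) := abs_of_pos (by positivity)
  rw [habs]
  have hb : |∫ φ in (0:ℝ)..(2 * π), (g r₁ φ - g r₂ φ)| ≤ |r₁ - r₂| * π := by
    refine le_trans (intervalIntegral.abs_integral_le_integral_abs (by positivity)) ?_
    have : ∫ φ in (0:ℝ)..(2 * π), |g r₁ φ - g r₂ φ| ≤
        ∫ φ in (0:ℝ)..(2 * π), |r₁ - r₂| * Real.sin φ ^ 2 := by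
      refine intervalIntegral.integral_mono_on (by positivity)
        ((((g_cont r₁).sub (g_cont r₂)).abs).intervalIntegrable _ _)
        ((continuous_const.mul (Real.continuous_sin.pow 2)).intervalIntegrable _ _) ?_
      intro x _
      unfold g
      rw [← sub_mul, abs_mul]
      calc |sat (r₁ * Real.sin x) - sat (r₂ * Real.sin x)| * |Real.sin x|
          ≤ |r₁ * Real.sin x - r₂ * Real.sin x| * |Real.sin x| :=
            mul_le_mul_of_nonneg_right (sat_lip _ _) (abs_nonneg _)
        _ = |r₁ - r₂| * Real.sin x ^ 2 := by
            rw [← sub_mul, abs_mul, mul_assoc, ← sq, sq_abs]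
    refine le_trans this (le_of_eq ?_)
    rw [intervalIntegral.integral_const_mul, integral_sin_sq, Real.sin_two_pi, Real.sin_zero]
    ring
  calc 1 / (2 * π) * |∫ φ in (0:ℝ)..(2 * π), (g r₁ φ - g r₂ φ)|
      ≤ 1 / (2 * π) * (|r₁ - r₂| * π) := by
        exact mul_le_mul_of_nonneg_left hb (by positivity)
    _ = 1/2 * |r₁ - r₂| := by field_simp

theorem stmt_17 :
    ContinuousOn (rho sat) (Set.Ici 0) ∧
    StrictMonoOn (rho sat) (Set.Ici 0) ∧
    (∀ r : ℝ, 0 ≤ r → r ≤ 1 → rho sat r = r / 2) ∧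
    (∀ r : ℝ, 0 ≤ r → rho sat r ≤ 2 / π) := by
  have hπ : (0:ℝ) < π := Real.pi_pos
  refine ⟨?_, ?_, ?_, ?_⟩
  · -- continuity via Lipschitz
    have : LipschitzWith (1/2 : NNReal) (rho sat) := by
      refine LipschitzWith.of_dist_le_mul fun x y => ?_
      rw [Real.dist_eq, Real.dist_eq]
      calc |rho sat x - rho sat y| ≤ 1/2 * |x - y| := rho_lip x y
        _ = ((1/2 : NNReal) : ℝ) * |x - y| := by norm_num
    exact this.continuous.continuousOn
  · -- strict monotonicity
    intro r₁ hr₁ r₂ hr₂ h12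
    simp only [Set.mem_Ici] at hr₁ hr₂
    -- choose interval [a, b]
    set b : ℝ := min (π / 2) (1 / (r₂ + 1)) with hb
    have hr₂pos : (0:ℝ) < r₂ + 1 := by linarith
    have hbpos : 0 < b := lt_min (by linarith) (by positivity)
    have hbl : b ≤ π / 2 := min_le_left _ _
    set a : ℝ := b / 2 with ha
    have hapos : 0 < a := by positivity
    have hab : a < b := by simp only [ha]; linarith
    have hsina : 0 < Real.sin a :=
      Real.sin_pos_of_pos_of_lt_pi hapos (by linarith)
    -- g r₂ φ - g r₁ φ ≥ (r₂ - r₁) * sin a ^ 2 on [a, b]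
    have key : ∀ φ ∈ Set.Icc a b, (r₂ - r₁) * Real.sin a ^ 2 ≤ g r₂ φ - g r₁ φ := by
      intro φ hφ
      have hφ1 : 0 < φ := lt_of_lt_of_le hapos hφ.1
      have hφ2 : φ ≤ π / 2 := le_trans hφ.2 hbl
      have hsinφ : 0 < Real.sin φ := Real.sin_pos_of_pos_of_lt_pi hφ1 (by linarith)
      have hsinle : Real.sin φ ≤ 1 / (r₂ + 1) := by
        calc Real.sin φ ≤ φ := Real.sin_le hφ1.le
          _ ≤ b := hφ.2
          _ ≤ 1 / (r₂ + 1) := min_le_right _ _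
      have h2 : r₂ * Real.sin φ ≤ 1 := by
        calc r₂ * Real.sin φ ≤ r₂ * (1 / (r₂ + 1)) :=
              mul_le_mul_of_nonneg_left hsinle hr₂
          _ ≤ 1 := by rw [mul_one_div, div_le_one hr₂pos]; linarith
      have h1 : r₁ * Real.sin φ ≤ 1 :=
        le_trans (mul_le_mul_of_nonneg_right (le_of_lt h12) hsinφ.le) h2
      have e2 : sat (r₂ * Real.sin φ) = r₂ * Real.sin φ :=
        sat_of_abs_le (abs_le.mpr ⟨by nlinarith, h2⟩)
      have e1 : sat (r₁ * Real.sin φ) = r₁ * Real.sin φ :=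
        sat_of_abs_le (abs_le.mpr ⟨by nlinarith, h1⟩)
      have hsinaφ : Real.sin a ≤ Real.sin φ := by
        refine Real.sin_le_sin_of_le_of_le_pi_div_two (by linarith) hφ2 hφ.1
      unfold g
      rw [e1, e2]
      have hsq : Real.sin a ^ 2 ≤ Real.sin φ ^ 2 := by nlinarith
      nlinarith [mul_le_mul_of_nonneg_left hsq (by linarith : (0:ℝ) ≤ r₂ - r₁)]
    have hint : ∀ r c d : ℝ, IntervalIntegrable (g r) MeasureTheory.volume c d :=
      fun r c d => (g_cont r).intervalIntegrable _ _
    -- split the integral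
    have hb2π : b ≤ 2 * π := by linarith
    have split1 := intervalIntegral.integral_add_adjacent_intervals
      (a := (0:ℝ)) (b := a) (c := 2 * π)
      (f := fun φ => g r₂ φ - g r₁ φ)
      ((hint r₂ 0 a).sub (hint r₁ 0 a)) ((hint r₂ a (2*π)).sub (hint r₁ a (2*π)))
    have split2 := intervalIntegral.integral_add_adjacent_intervals
      (a := a) (b := b) (c := 2 * π)
      (f := fun φ => g r₂ φ - g r₁ φ)
      ((hint r₂ a b).sub (hint r₁ a b)) ((hint r₂ b (2*π)).sub (hint r₁ b (2*π)))
    have hnn : ∀ c d : ℝ, c ≤ d → 0 ≤ ∫ φ in c..d, (g r₂ φ - g r₁ φ) := by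
      intro c d hcd
      refine intervalIntegral.integral_nonneg hcd fun x _ => ?_
      have := g_mono hr₁ h12.le x
      linarith
    have hmid : (b - a) * ((r₂ - r₁) * Real.sin a ^ 2) ≤ ∫ φ in a..b, (g r₂ φ - g r₁ φ) := by
      have := intervalIntegral.integral_mono_on (a := a) (b := b) hab.le
        (intervalIntegrable_const (c := (r₂ - r₁) * Real.sin a ^ 2))
        ((hint r₂ a b).sub (hint r₁ a b)) key
      rwa [intervalIntegral.integral_const, smul_eq_mul] at this
    have hpos : 0 < ∫ φ in (0:ℝ)..(2 * π), (g r₂ φ - g r₁ φ) := by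
      rw [← split1, ← split2]
      have n1 := hnn 0 a hapos.le
      have n3 := hnn b (2 * π) hb2π
      have : 0 < (b - a) * ((r₂ - r₁) * Real.sin a ^ 2) := by
        apply mul_pos (by linarith)
        exact mul_pos (by linarith) (by positivity)
      linarith
    rw [rho_eq, rho_eq]
    have hI := intervalIntegral.integral_sub (hint r₂ 0 (2*π)) (hint r₁ 0 (2*π))
    have : (∫ φ in (0:ℝ)..(2*π), g r₁ φ) < ∫ φ in (0:ℝ)..(2*π), g r₂ φ := by
      have := hpos
      rw [hI] at this
      linarith
    have hc : (0:ℝ) < 1 / (2 * π) := by positivity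
    exact mul_lt_mul_of_pos_left this hc
  · -- formula for r ≤ 1
    intro r hr0 hr1
    rw [rho_eq]
    have : (∫ φ in (0:ℝ)..(2 * π), g r φ) = ∫ φ in (0:ℝ)..(2 * π), r * Real.sin φ ^ 2 := by
      refine intervalIntegral.integral_congr fun x _ => ?_
      unfold g
      have habs : |r * Real.sin x| ≤ 1 := by
        rw [abs_mul, abs_of_nonneg hr0]
        calc r * |Real.sin x| ≤ 1 * 1 :=
          mul_le_mul hr1 (Real.abs_sin_le_one x) (abs_nonneg _) one_pos.le
        _ = 1 := one_mul 1
      rw [sat_of_abs_le habs]; ring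
    rw [this, intervalIntegral.integral_const_mul, integral_sin_sq]
    have h2π : Real.sin (2 * π) = 0 := by simp [Real.sin_two_pi]
    rw [h2π]
    simp
    field_simp
  · -- bound
    intro r hr0
    rw [rho_eq]
    have hle : (∫ φ in (0:ℝ)..(2 * π), g r φ) ≤ ∫ φ in (0:ℝ)..(2 * π), |Real.sin φ| := by
      refine intervalIntegral.integral_mono_on (by positivity)
        ((g_cont r).intervalIntegrable _ _)
        ((continuous_abs.comp Real.continuous_sin).intervalIntegrable _ _)
        fun x _ => g_le_abs r x
    rw [integral_abs_sin] at hle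
    calc (1 / (2 * π)) * ∫ φ in (0:ℝ)..(2 * π), g r φ
        ≤ (1 / (2 * π)) * 4 := mul_le_mul_of_nonneg_left hle (by positivity)
      _ = 2 / π := by field_simp; ring
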